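/- arXiv:2109.06855 — 3 statements merged into one kernel-verified Lean document; each statement's English description precedes it below -/
import Mathlib

section
/- Fix q ∈ (0,1) and consider the equation (1−q)·(e^{−t} − t²/2) = q·(t + e^{−t})² in the real variable t ≥ 0. This equation has a nonnegative solution if and only if q ≤ 1/2; moreover, when 0 < q < 1/2 the nonnegative solution is unique and strictly positive, and when q = 1/2 the unique nonnegative solution is t = 0. -/
/-!
Write `F q t = (1 - q)(e^{-t} - t²/2) - q(t + e^{-t})²`, so the equation reads `F q t = 0`.
For `q ∈ [0, 1]` the derivative `-(t + e^{-t})((1 - q) + 2q(1 - e^{-t}))` is negative for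
`t > 0`, so `F q` is strictly decreasing on `[0, ∞)` and has at most one zero there. Since
`F q 0 = 1 - 2q` and `F q 2 < 0`, a zero exists exactly when `1 - 2q ≥ 0`, and it is `t = 0`
exactly when `q = 1/2`.
-/

open Real Set

noncomputable def thresholdResidual (q t : ℝ) : ℝ :=
  (1 - q) * (exp (-t) - t ^ 2 / 2) - q * (t + exp (-t)) ^ 2

namespace thresholdResidual

theorem eq_zero_iff (q t : ℝ) :
    thresholdResidual q t = 0 ↔
      (1 - q) * (exp (-t) - t ^ 2 / 2) = q * (t + exp (-t)) ^ 2 :=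
  sub_eq_zero

theorem apply_zero (q : ℝ) : thresholdResidual q 0 = 1 - 2 * q := by
  simp only [thresholdResidual, neg_zero, exp_zero]
  ring

theorem hasDerivAt (q t : ℝ) :
    HasDerivAt (thresholdResidual q)
      (-(t + exp (-t)) * ((1 - q) + 2 * q * (1 - exp (-t)))) t := by
  have hexp : HasDerivAt (fun t : ℝ => exp (-t)) (-exp (-t)) t := by
    simpa using (hasDerivAt_neg t).exp
  have hsq : HasDerivAt (fun t : ℝ => t ^ 2 / 2) t t := by
    simpa using (hasDerivAt_pow 2 t).div_const 2
  have hsum := ((hasDerivAt_id' t).fun_add hexp).fun_pow 2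
  refine (((hexp.fun_sub hsq).const_mul (1 - q)).fun_sub (hsum.const_mul q)).congr_deriv ?_
  norm_num
  ring

theorem continuous (q : ℝ) : Continuous (thresholdResidual q) :=
  continuous_iff_continuousAt.mpr fun t => (hasDerivAt q t).continuousAt

theorem strictAntiOn {q : ℝ} (hq0 : 0 ≤ q) (hq1 : q ≤ 1) :
    StrictAntiOn (thresholdResidual q) (Ici 0) := by
  refine strictAntiOn_of_deriv_neg (convex_Ici 0) (continuous q).continuousOn fun t ht => ?_
  rw [interior_Ici, mem_Ioi] at ht
  rw [(hasDerivAt q t).deriv]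
  have hexp_lt_one : exp (-t) < 1 := exp_lt_one_iff.mpr (neg_neg_of_pos ht)
  have hbase : 0 < t + exp (-t) := by positivity
  have hfactor : 0 < (1 - q) + 2 * q * (1 - exp (-t)) := by
    rcases hq0.eq_or_lt with rfl | hq0
    · norm_num
    · nlinarith
  nlinarith

theorem apply_two_nonpos {q : ℝ} (hq0 : 0 ≤ q) (hq1 : q ≤ 1) : thresholdResidual q 2 ≤ 0 := by
  have hexp_lt_one : exp (-2 : ℝ) < 1 := exp_lt_one_iff.mpr (by norm_num)
  have hexp_pos : 0 < exp (-2 : ℝ) := exp_pos _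
  simp only [thresholdResidual]
  nlinarith

theorem exists_eq_zero {q : ℝ} (hq0 : 0 ≤ q) (hq : q ≤ 1 / 2) :
    ∃ t, 0 ≤ t ∧ thresholdResidual q t = 0 := by
  have hzero : 0 ∈ Icc (thresholdResidual q 2) (thresholdResidual q 0) :=
    ⟨apply_two_nonpos hq0 (by linarith), by rw [apply_zero]; linarith⟩
  obtain ⟨t, ht, hroot⟩ :=
    intermediate_value_Icc' zero_le_two (continuous q).continuousOn hzero
  exact ⟨t, ht.1, hroot⟩

theorem le_half_of_eq_zero {q t : ℝ} (hq0 : 0 ≤ q) (hq1 : q ≤ 1) (ht : 0 ≤ t)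
    (hroot : thresholdResidual q t = 0) : q ≤ 1 / 2 := by
  have := (strictAntiOn hq0 hq1).antitoneOn self_mem_Ici ht ht
  rw [hroot, apply_zero] at this
  linarith

end thresholdResidual

open thresholdResidual in
/-- For `q ∈ (0,1)`, the equation `(1−q)(e^{−t} − t²/2) = q(t + e^{−t})²` has a nonnegative
solution iff `q ≤ 1/2`; for `0 < q < 1/2` the nonnegative solution is unique and strictly
positive, and for `q = 1/2` the unique nonnegative solution is `t = 0`. -/
theorem stmt2 (q : ℝ) (hq0 : 0 < q) (hq1 : q < 1) :
    ((∃ t : ℝ, 0 ≤ t ∧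
        (1 - q) * (Real.exp (-t) - t ^ 2 / 2) = q * (t + Real.exp (-t)) ^ 2) ↔ q ≤ 1 / 2) ∧
    (q < 1 / 2 →
      (∃! t : ℝ, 0 ≤ t ∧
          (1 - q) * (Real.exp (-t) - t ^ 2 / 2) = q * (t + Real.exp (-t)) ^ 2) ∧
      (∀ t : ℝ, 0 ≤ t →
          (1 - q) * (Real.exp (-t) - t ^ 2 / 2) = q * (t + Real.exp (-t)) ^ 2 → 0 < t)) ∧
    (q = 1 / 2 →
      ∀ t : ℝ, 0 ≤ t →
        ((1 - q) * (Real.exp (-t) - t ^ 2 / 2) = q * (t + Real.exp (-t)) ^ 2 ↔ t = 0)) := by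
  simp only [← eq_zero_iff]
  have hanti := strictAntiOn hq0.le hq1.le
  have hroot_zero_iff : thresholdResidual q 0 = 0 ↔ q = 1 / 2 := by
    rw [apply_zero]
    constructor <;> intro h <;> linarith
  refine ⟨⟨fun ⟨t, ht, hroot⟩ => le_half_of_eq_zero hq0.le hq1.le ht hroot,
      exists_eq_zero hq0.le⟩, fun hq => ⟨?_, ?_⟩, fun hq t ht => ⟨fun hroot => ?_, ?_⟩⟩
  · obtain ⟨t, ht, hroot⟩ := exists_eq_zero hq0.le hq.le
    exact ⟨t, ⟨ht, hroot⟩, fun s ⟨hs, hsroot⟩ => hanti.injOn hs ht (hsroot.trans hroot.symm)⟩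
  · intro t ht hroot
    refine ht.lt_of_ne fun h => ?_
    rw [← h, hroot_zero_iff] at hroot
    linarith
  · exact hanti.injOn ht self_mem_Ici (hroot.trans (hroot_zero_iff.mpr hq).symm)
  · rintro rfl
    exact hroot_zero_iff.mpr hq
end

section
/- For every real q with 0 ≤ q < 1 there exists a unique real λ > q/(1−q) satisfying e^{−(λ − q/(1−q))} + (2q − q²)/(2(1−q)²) = λ²/2. -/
/-- For every real `q` with `0 ≤ q < 1` there exists a unique real `λ > q/(1−q)` satisfying
`e^{−(λ − q/(1−q))} + (2q − q²)/(2(1−q)²) = λ²/2`. -/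
theorem stmt3 (q : ℝ) (hq0 : 0 ≤ q) (hq1 : q < 1) :
    ∃! lam : ℝ, lam > q / (1 - q) ∧
      Real.exp (-(lam - q / (1 - q))) + (2 * q - q ^ 2) / (2 * (1 - q) ^ 2) = lam ^ 2 / 2 := by
  set a : ℝ := q / (1 - q) with ha
  have h1q : 0 < 1 - q := by linarith
  have ha0 : 0 ≤ a := div_nonneg hq0 h1q.le
  have hc : (2 * q - q ^ 2) / (2 * (1 - q) ^ 2) = a ^ 2 / 2 + a := by
    rw [ha]; field_simp; ring
  have key : ∀ lam : ℝ,
      (Real.exp (-(lam - a)) + (2 * q - q ^ 2) / (2 * (1 - q) ^ 2) = lam ^ 2 / 2)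
      ↔ lam ^ 2 / 2 - Real.exp (-(lam - a)) = a ^ 2 / 2 + a := by
    intro lam; rw [hc]; constructor <;> intro h <;> linarith
  set g : ℝ → ℝ := fun x => x ^ 2 / 2 - Real.exp (-(x - a)) with hg
  have hmono : StrictMonoOn g (Set.Ici a) := by
    intro x hx y hy hxy
    have hexp : Real.exp (-(y - a)) < Real.exp (-(x - a)) := by
      apply Real.exp_lt_exp.2; linarith
    have hx0 : 0 ≤ x := le_trans ha0 hx
    simp only [hg]
    nlinarith
  have hcont : Continuous g := by
    simp only [hg]; continuity
  have hga : g a = a ^ 2 / 2 - 1 := by simp [hg]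
  have hgb : g (a + 2) = (a + 2) ^ 2 / 2 - Real.exp (-2) := by
    simp only [hg]; norm_num
  have he2 : Real.exp (-2) < 1 := by
    rw [Real.exp_lt_one_iff]; norm_num
  have hmem : a ^ 2 / 2 + a ∈ Set.Ioo (g a) (g (a + 2)) := by
    rw [hga, hgb]
    constructor
    · nlinarith
    · nlinarith
  obtain ⟨lam, hlamI, hglam⟩ :=
    intermediate_value_Ioo (by linarith : a ≤ a + 2) hcont.continuousOn hmem
  refine ⟨lam, ⟨hlamI.1, (key lam).2 hglam⟩, ?_⟩
  intro y hy
  have hy2 : g y = a ^ 2 / 2 + a := (key y).1 hy.2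
  exact hmono.injOn (Set.mem_Ici.2 hy.1.le) (Set.mem_Ici.2 hlamI.1.le)
    (by rw [hy2, hglam])
end

section
/- Let 0 < q < 1 and γ ≥ 0. Let τ₁, τ₂, … be i.i.d. random variables with the exponential distribution of rate 1, and let N take values in {1, 2, 3, …} with P(N = m) = q^{m−1}(1−q), independent of (τ_k). Set α = max(γ, τ₁) + Σ_{k=2}^{N} τ_k (the sum being empty when N = 1). Then E[α²] = γ² + 2(γ+1)e^{−γ} + 2(γ + e^{−γ})·q/(1−q) + 2q/(1−q)². -/
open MeasureTheory ProbabilityTheory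

/-!
Conditioning on `N`, which is independent of the `τ k`, gives `E[α²] = ∑ₘ P(N = m) E[Sₘ²]` with
`Sₘ = max(γ, τ₀) + τ₁ + ⋯ + τₘ₋₁`. As a sum of independent square-integrable variables,
`E[Sₘ²] = ∑ Var + (∑ E)²`; with `E τ = 1`, `E τ² = 2`, `M₁ = E max(γ, τ) = γ + e^{-γ}` and
`M₂ = E max(γ, τ)² = γ² + 2(γ + 1)e^{-γ}` this is `E[S_{n+1}²] = M₂ + 2M₁n + n(n + 1)`, and summing
against the geometric weights `qⁿ(1 - q)` gives the closed form.
-/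

open Real Set Filter Topology
open scoped ENNReal

section ExpIntegrals

lemma hasDerivAt_neg_add_one_mul_exp_neg (x : ℝ) :
    HasDerivAt (fun t => -((t + 1) * exp (-t))) (x * exp (-x)) x := by
  have := (((hasDerivAt_id x).add_const 1).mul (hasDerivAt_neg x).exp).neg
  refine this.congr_deriv ?_
  simp only [id]; ring

lemma hasDerivAt_neg_sq_add_mul_exp_neg (x : ℝ) :
    HasDerivAt (fun t => -((t ^ 2 + 2 * t + 2) * exp (-t))) (x ^ 2 * exp (-x)) x := by
  have := ((((hasDerivAt_pow 2 x).add ((hasDerivAt_id x).const_mul 2)).add_const 2).mul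
    (hasDerivAt_neg x).exp).neg
  refine this.congr_deriv ?_
  simp only [Pi.add_apply, id]; ring

lemma tendsto_neg_add_one_mul_exp_neg :
    Tendsto (fun t => -((t + 1) * exp (-t))) atTop (𝓝 0) := by
  have := ((tendsto_pow_mul_exp_neg_atTop_nhds_zero 1).add
    (tendsto_pow_mul_exp_neg_atTop_nhds_zero 0)).neg
  simpa [add_mul] using this

lemma tendsto_neg_sq_add_mul_exp_neg :
    Tendsto (fun t => -((t ^ 2 + 2 * t + 2) * exp (-t))) atTop (𝓝 0) := by
  have := (((tendsto_pow_mul_exp_neg_atTop_nhds_zero 2).add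
    ((tendsto_pow_mul_exp_neg_atTop_nhds_zero 1).const_mul 2)).add
    ((tendsto_pow_mul_exp_neg_atTop_nhds_zero 0).const_mul 2)).neg
  simpa [add_mul, mul_assoc] using this

variable {a : ℝ}

lemma integrableOn_Ioi_mul_exp_neg (ha : 0 ≤ a) :
    IntegrableOn (fun t => t * exp (-t)) (Ioi a) :=
  integrableOn_Ioi_deriv_of_nonneg' (fun x _ => hasDerivAt_neg_add_one_mul_exp_neg x)
    (fun _ hx => mul_nonneg (ha.trans hx.le) (exp_pos _).le) tendsto_neg_add_one_mul_exp_neg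

lemma integral_Ioi_mul_exp_neg (ha : 0 ≤ a) :
    ∫ t in Ioi a, t * exp (-t) = (a + 1) * exp (-a) := by
  rw [integral_Ioi_of_hasDerivAt_of_nonneg' (fun x _ => hasDerivAt_neg_add_one_mul_exp_neg x)
    (fun x hx => mul_nonneg (ha.trans hx.le) (exp_pos _).le) tendsto_neg_add_one_mul_exp_neg]
  ring

lemma integrableOn_Ioi_sq_mul_exp_neg : IntegrableOn (fun t => t ^ 2 * exp (-t)) (Ioi a) :=
  integrableOn_Ioi_deriv_of_nonneg' (fun x _ => hasDerivAt_neg_sq_add_mul_exp_neg x)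
    (fun _ _ => by positivity) tendsto_neg_sq_add_mul_exp_neg

lemma integral_Ioi_sq_mul_exp_neg :
    ∫ t in Ioi a, t ^ 2 * exp (-t) = (a ^ 2 + 2 * a + 2) * exp (-a) := by
  rw [integral_Ioi_of_hasDerivAt_of_nonneg' (fun x _ => hasDerivAt_neg_sq_add_mul_exp_neg x)
    (fun _ _ => by positivity) tendsto_neg_sq_add_mul_exp_neg]
  ring

lemma integral_Ioc_exp_neg (ha : 0 ≤ a) : ∫ t in Ioc 0 a, exp (-t) = 1 - exp (-a) := by
  rw [← intervalIntegral.integral_of_le ha, intervalIntegral.integral_comp_neg (fun t => exp t)]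
  simp [integral_exp]

end ExpIntegrals

lemma toReal_exponentialPDF_one (t : ℝ) :
    (exponentialPDF 1 t).toReal = (Ici 0).indicator (fun t => exp (-t)) t := by
  rcases lt_or_ge t 0 with ht | ht
  · simp [exponentialPDF_of_neg ht, ht]
  · simp [exponentialPDF_of_nonneg ht, ht, (exp_pos _).le]

lemma integral_expMeasure_one (f : ℝ → ℝ) :
    ∫ t, f t ∂expMeasure 1 = ∫ t in Ioi 0, f t * exp (-t) := by
  rw [show expMeasure 1 = volume.withDensity (exponentialPDF 1) from rfl,
    integral_withDensity_eq_integral_toReal_smul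
    (show Measurable (exponentialPDF 1) from (measurable_exponentialPDFReal 1).ennreal_ofReal)
    (ae_of_all _ fun _ => ENNReal.ofReal_lt_top)]
  simp_rw [toReal_exponentialPDF_one, smul_eq_mul, ← indicator_mul_left,
    integral_indicator measurableSet_Ici, integral_Ici_eq_integral_Ioi, mul_comm]

lemma integrable_expMeasure_one_iff {f : ℝ → ℝ} :
    Integrable f (expMeasure 1) ↔ IntegrableOn (fun t => f t * exp (-t)) (Ioi 0) := by
  rw [show expMeasure 1 = volume.withDensity (exponentialPDF 1) from rfl,
    integrable_withDensity_iff_integrable_smul'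
    (show Measurable (exponentialPDF 1) from (measurable_exponentialPDFReal 1).ennreal_ofReal)
    (ae_of_all _ fun _ => ENNReal.ofReal_lt_top)]
  simp_rw [toReal_exponentialPDF_one, smul_eq_mul, ← indicator_mul_left]
  rw [integrable_indicator_iff measurableSet_Ici, integrableOn_Ici_iff_integrableOn_Ioi]
  exact integrableOn_congr_fun (fun t _ => mul_comm _ _) measurableSet_Ioi

section ExpMeasureMax

variable {γ : ℝ} {h : ℝ → ℝ}

lemma integrable_comp_max_expMeasure_one (hγ : 0 ≤ γ)
    (hh : IntegrableOn (fun t => h t * exp (-t)) (Ioi γ)) :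
    Integrable (fun t => h (max γ t)) (expMeasure 1) := by
  rw [integrable_expMeasure_one_iff, ← Ioc_union_Ioi_eq_Ioi hγ]
  refine IntegrableOn.union ?_ ?_
  · refine (integrableOn_congr_fun (fun t ht => ?_) measurableSet_Ioc).2
      ((show Continuous fun t => h γ * exp (-t) by fun_prop).integrableOn_Ioc)
    rw [max_eq_left ht.2]
  · exact (integrableOn_congr_fun (fun t ht => by rw [max_eq_right (le_of_lt ht)])
      measurableSet_Ioi).2 hh

lemma integral_comp_max_expMeasure_one (hγ : 0 ≤ γ)
    (hh : IntegrableOn (fun t => h t * exp (-t)) (Ioi γ)) :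
    ∫ t, h (max γ t) ∂expMeasure 1 = h γ * (1 - exp (-γ)) + ∫ t in Ioi γ, h t * exp (-t) := by
  have hI := integrable_expMeasure_one_iff.1 (integrable_comp_max_expMeasure_one hγ hh)
  rw [← Ioc_union_Ioi_eq_Ioi hγ] at hI
  rw [integral_expMeasure_one, ← Ioc_union_Ioi_eq_Ioi hγ,
    setIntegral_union (Ioc_disjoint_Ioi le_rfl) measurableSet_Ioi hI.left_of_union
      hI.right_of_union,
    setIntegral_congr_fun measurableSet_Ioc (fun t ht => by rw [max_eq_left ht.2]),
    setIntegral_congr_fun measurableSet_Ioi (fun t ht => by rw [max_eq_right (le_of_lt ht)]),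
    integral_const_mul, integral_Ioc_exp_neg hγ]

lemma memLp_max_expMeasure_one (hγ : 0 ≤ γ) : MemLp (fun t => max γ t) 2 (expMeasure 1) :=
  (memLp_two_iff_integrable_sq (by fun_prop)).2
    (integrable_comp_max_expMeasure_one (h := (· ^ 2)) hγ integrableOn_Ioi_sq_mul_exp_neg)

lemma integral_max_expMeasure_one (hγ : 0 ≤ γ) :
    ∫ t, max γ t ∂expMeasure 1 = γ + exp (-γ) := by
  have h := integral_comp_max_expMeasure_one (h := id) hγ (integrableOn_Ioi_mul_exp_neg hγ)
  simp only [id] at h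
  rw [h, integral_Ioi_mul_exp_neg hγ]
  ring

lemma integral_max_sq_expMeasure_one (hγ : 0 ≤ γ) :
    ∫ t, max γ t ^ 2 ∂expMeasure 1 = γ ^ 2 + 2 * (γ + 1) * exp (-γ) := by
  rw [integral_comp_max_expMeasure_one (h := (· ^ 2)) hγ integrableOn_Ioi_sq_mul_exp_neg,
    integral_Ioi_sq_mul_exp_neg]
  ring

end ExpMeasureMax

lemma memLp_id_expMeasure_one : MemLp id 2 (expMeasure 1) :=
  (memLp_two_iff_integrable_sq (by fun_prop)).2
    (integrable_expMeasure_one_iff.2 integrableOn_Ioi_sq_mul_exp_neg)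

lemma integral_id_expMeasure_one : ∫ t, t ∂expMeasure 1 = 1 := by
  rw [integral_expMeasure_one, integral_Ioi_mul_exp_neg le_rfl]
  simp

lemma integral_sq_expMeasure_one : ∫ t, t ^ 2 ∂expMeasure 1 = 2 := by
  rw [integral_expMeasure_one, integral_Ioi_sq_mul_exp_neg]
  simp

lemma hasSum_geometric_mul_quadratic {q : ℝ} (hq : |q| < 1) (a b : ℝ) :
    HasSum (fun n : ℕ => q ^ n * (1 - q) * (a + 2 * b * n + n * (n + 1)))
      (a + 2 * b * q / (1 - q) + 2 * q / (1 - q) ^ 2) := by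
  have hq' : ‖q‖ < 1 := hq
  have h1q : 1 - q ≠ 0 := by linarith [le_abs_self q]
  -- `(n + 1)(n + 2) = 2 * (n + 2).choose 2`, so after a shift this is a binomial series.
  have hsq : HasSum (fun n : ℕ => (n : ℝ) * (n + 1) * q ^ n) (2 * q / (1 - q) ^ 3) := by
    refine (hasSum_nat_add_iff' 1).1 ?_
    have h := (hasSum_choose_mul_geometric_of_norm_lt_one 2 hq').mul_left (2 * q)
    rw [show 2 * q / (1 - q) ^ 3 - ∑ i ∈ Finset.range 1, (i : ℝ) * (i + 1) * q ^ i
      = 2 * q * (1 / (1 - q) ^ (2 + 1)) by simp; ring]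
    refine h.congr_fun fun n => ?_
    push_cast [Nat.cast_choose_two]
    ring
  have h := (((hasSum_geometric_of_abs_lt_one hq).mul_left (a * (1 - q))).add
    ((hasSum_coe_mul_geometric_of_norm_lt_one hq').mul_left (2 * b * (1 - q)))).add
    (hsq.mul_left (1 - q))
  rw [show a + 2 * b * q / (1 - q) + 2 * q / (1 - q) ^ 2 = a * (1 - q) * (1 - q)⁻¹
    + 2 * b * (1 - q) * (q / (1 - q) ^ 2) + (1 - q) * (2 * q / (1 - q) ^ 3) by field_simp]
  exact h.congr_fun fun n => by ring

section Probability

variable {Ω : Type*} {mΩ : MeasurableSpace Ω} {μ : Measure Ω}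

lemma integral_sq_sum_of_pairwise_indepFun [IsProbabilityMeasure μ] {ι : Type*}
    {Y : ι → Ω → ℝ} {s : Finset ι} (hY : ∀ i ∈ s, MemLp (Y i) 2 μ)
    (hindep : Set.Pairwise s fun i j => IndepFun (Y i) (Y j) μ) :
    ∫ ω, (∑ i ∈ s, Y i ω) ^ 2 ∂μ
      = ∑ i ∈ s, (∫ ω, Y i ω ^ 2 ∂μ - (∫ ω, Y i ω ∂μ) ^ 2) + (∑ i ∈ s, ∫ ω, Y i ω ∂μ) ^ 2 := by
  have h := variance_eq_sub (memLp_finsetSum' s hY)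
  simp only [Finset.sum_apply, Pi.pow_apply] at h
  rw [IndepFun.variance_sum hY hindep,
    integral_finsetSum s fun i hi => (hY i hi).integrable one_le_two] at h
  have hvar : ∀ i ∈ s, variance (Y i) μ = ∫ ω, Y i ω ^ 2 ∂μ - (∫ ω, Y i ω ∂μ) ^ 2 :=
    fun i hi => variance_eq_sub (hY i hi)
  rw [Finset.sum_congr rfl hvar] at h
  linarith

lemma lintegral_comp_eq_tsum_of_indepFun [IsFiniteMeasure μ] {ι β : Type*} [Countable ι]
    [MeasurableSpace ι] [MeasurableSingletonClass ι] [MeasurableSpace β] {N : Ω → ι} {Y : Ω → β} (hN : Measurable N) (hY : Measurable Y) (hNY : IndepFun N Y μ)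
    {F : ι → β → ℝ≥0∞} (hF : ∀ m, Measurable (F m)) :
    ∫⁻ ω, F (N ω) (Y ω) ∂μ = ∑' m, μ {ω | N ω = m} * ∫⁻ ω, F m (Y ω) ∂μ := by
  have hF' : Measurable (Function.uncurry F) := measurable_from_prod_countable_right hF
  calc ∫⁻ ω, F (N ω) (Y ω) ∂μ
      = ∫⁻ p, Function.uncurry F p ∂(μ.map fun ω => (N ω, Y ω)) :=
        (lintegral_map hF' (hN.prodMk hY)).symm
    _ = ∫⁻ p, Function.uncurry F p ∂((μ.map N).prod (μ.map Y)) := by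
        rw [(indepFun_iff_map_prod_eq_prod_map_map hN.aemeasurable hY.aemeasurable).1 hNY]
    _ = ∫⁻ m, ∫⁻ y, F m y ∂(μ.map Y) ∂(μ.map N) := lintegral_prod _ hF'.aemeasurable
    _ = ∑' m, μ {ω | N ω = m} * ∫⁻ ω, F m (Y ω) ∂μ := by
        rw [lintegral_countable']
        refine tsum_congr fun m => ?_
        rw [Measure.map_apply hN (measurableSet_singleton m), lintegral_map (hF m) hY, mul_comm]
        rfl

lemma integral_comp_eq_of_indepFun_of_hasSum [IsFiniteMeasure μ] {ι β : Type*} [Countable ι]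
    [MeasurableSpace ι] [MeasurableSingletonClass ι] [MeasurableSpace β] {N : Ω → ι} {Y : Ω → β} (hN : Measurable N) (hY : Measurable Y) (hNY : IndepFun N Y μ)
    {F : ι → β → ℝ} (hF : ∀ m, Measurable (F m)) (hF0 : ∀ m y, 0 ≤ F m y)
    (hint : ∀ m, Integrable (fun ω => F m (Y ω)) μ) {s : ℝ}
    (hs : HasSum (fun m => μ.real {ω | N ω = m} * ∫ ω, F m (Y ω) ∂μ) s) :
    ∫ ω, F (N ω) (Y ω) ∂μ = s := by
  have hmeas : Measurable fun ω => F (N ω) (Y ω) :=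
    (measurable_from_prod_countable_right (f := Function.uncurry F) hF).comp (hN.prodMk hY)
  have hterm : ∀ m, μ {ω | N ω = m} * ∫⁻ ω, ENNReal.ofReal (F m (Y ω)) ∂μ
      = ENNReal.ofReal (μ.real {ω | N ω = m} * ∫ ω, F m (Y ω) ∂μ) := fun m => by
    rw [ENNReal.ofReal_mul measureReal_nonneg, ofReal_measureReal (measure_ne_top _ _),
      ofReal_integral_eq_lintegral_ofReal (hint m) (ae_of_all _ fun _ => hF0 _ _)]
  have hnonneg : ∀ m, 0 ≤ μ.real {ω | N ω = m} * ∫ ω, F m (Y ω) ∂μ := fun m =>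
    mul_nonneg measureReal_nonneg (integral_nonneg fun _ => hF0 _ _)
  rw [integral_eq_lintegral_of_nonneg_ae (ae_of_all _ fun _ => hF0 _ _)
      hmeas.aestronglyMeasurable,
    lintegral_comp_eq_tsum_of_indepFun hN hY hNY fun m => (hF m).ennreal_ofReal,
    tsum_congr hterm, ← ENNReal.ofReal_tsum_of_nonneg hnonneg hs.summable, hs.tsum_eq,
    ENNReal.toReal_ofReal (hs.nonneg hnonneg)]

lemma measure_eq_zero_of_geometric [IsProbabilityMeasure μ] {N : Ω → ℕ} (hN : Measurable N)
    {q : ℝ} (hq0 : 0 ≤ q) (hq1 : q < 1)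
    (hlaw : ∀ m : ℕ, 1 ≤ m → μ {ω | N ω = m} = ENNReal.ofReal (q ^ (m - 1) * (1 - q))) :
    μ {ω | N ω = 0} = 0 := by
  have htotal : ∑' m, μ {ω | N ω = m} = 1 := by
    have h := lintegral_countable' (μ := μ.map N) fun _ => 1
    simp only [lintegral_const, one_mul] at h
    simpa [Measure.map_apply hN (measurableSet_singleton _), Set.preimage,
      Measure.map_apply hN MeasurableSet.univ] using h.symm
  have hsucc : ∑' n : ℕ, μ {ω | N ω = n + 1} = 1 := by
    simp_rw [hlaw _ (Nat.le_add_left 1 _), Nat.add_sub_cancel]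
    rw [← ENNReal.ofReal_tsum_of_nonneg (fun n => by positivity)
      ((summable_geometric_of_lt_one hq0 hq1).mul_right _), tsum_mul_right,
      tsum_geometric_of_lt_one hq0 hq1, inv_mul_cancel₀ (by linarith), ENNReal.ofReal_one]
  rw [tsum_eq_zero_add' ENNReal.summable, hsucc] at htotal
  exact (ENNReal.add_left_inj ENNReal.one_ne_top).1 (htotal.trans (zero_add 1).symm)

end Probability

section ThresholdEpoch

variable {Ω : Type*} {mΩ : MeasurableSpace Ω} {μ : Measure Ω} {τ : ℕ → Ω → ℝ} {γ : ℝ}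

lemma memLp_max_add_sum_of_map_eq_expMeasure (hmeas : ∀ k, Measurable (τ k))
    (hdist : ∀ k, μ.map (τ k) = expMeasure 1) (hγ : 0 ≤ γ) (m : ℕ) :
    MemLp (fun ω => max γ (τ 0 ω) + ∑ k ∈ Finset.Ico 1 m, τ k ω) 2 μ :=
  ((memLp_max_expMeasure_one hγ).comp_measurePreserving ⟨hmeas 0, hdist 0⟩).add
    (memLp_finsetSum _ fun k _ =>
      memLp_id_expMeasure_one.comp_measurePreserving ⟨hmeas k, hdist k⟩)

lemma integral_sq_max_add_sum_of_iIndepFun [IsProbabilityMeasure μ]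
    (hmeas : ∀ k, Measurable (τ k)) (hdist : ∀ k, μ.map (τ k) = expMeasure 1)
    (hindep : iIndepFun τ μ) (hγ : 0 ≤ γ) (n : ℕ) :
    ∫ ω, (max γ (τ 0 ω) + ∑ k ∈ Finset.Ico 1 (n + 1), τ k ω) ^ 2 ∂μ
      = γ ^ 2 + 2 * (γ + 1) * exp (-γ) + 2 * (γ + exp (-γ)) * n + n * (n + 1) := by
  set g : ℕ → ℝ → ℝ := fun k t => if k = 0 then max γ t else t
  have hg : ∀ k, Measurable (g k) := fun k => by
    rcases eq_or_ne k 0 with rfl | hk <;> simp [g, *] <;> fun_prop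
  have hgLp : ∀ k, MemLp (g k) 2 (expMeasure 1) := fun k => by
    rcases eq_or_ne k 0 with rfl | hk
    · simpa [g] using memLp_max_expMeasure_one hγ
    · simp only [g, if_neg hk]
      exact memLp_id_expMeasure_one
  have hcomp : ∀ k (f : ℝ → ℝ), Measurable f → ∫ ω, f (τ k ω) ∂μ = ∫ t, f t ∂expMeasure 1 :=
    fun k f hf => by rw [← hdist k, integral_map (hmeas k).aemeasurable hf.aestronglyMeasurable]
  have hmean : ∀ k, ∫ ω, g k (τ k ω) ∂μ = if k = 0 then γ + exp (-γ) else 1 := fun k => by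
    rw [hcomp k _ (hg k)]
    rcases eq_or_ne k 0 with rfl | hk
    · simp [g, integral_max_expMeasure_one hγ]
    · simp [g, hk, integral_id_expMeasure_one]
  have hsq : ∀ k, ∫ ω, g k (τ k ω) ^ 2 ∂μ
      = if k = 0 then γ ^ 2 + 2 * (γ + 1) * exp (-γ) else 2 := fun k => by
    rw [hcomp k (fun t => g k t ^ 2) ((hg k).pow_const 2)]
    rcases eq_or_ne k 0 with rfl | hk
    · simp [g, integral_max_sq_expMeasure_one hγ]
    · simp [g, hk, integral_sq_expMeasure_one]
  have hsum : ∀ ω, max γ (τ 0 ω) + ∑ k ∈ Finset.Ico 1 (n + 1), τ k ω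
      = ∑ k ∈ Finset.range (n + 1), g k (τ k ω) := fun ω => by
    rw [Finset.sum_range_succ', Finset.sum_Ico_eq_sum_range]
    simp [g, add_comm]
  simp_rw [hsum]
  rw [integral_sq_sum_of_pairwise_indepFun (Y := fun k ω => g k (τ k ω))
    (fun k _ => (hgLp k).comp_measurePreserving ⟨hmeas k, hdist k⟩)
    (fun i _ j _ hij => (hindep.comp g hg).indepFun hij)]
  simp only [hmean, hsq, Finset.sum_range_succ']
  simp only [Nat.add_eq_zero_iff, one_ne_zero, and_false, ↓reduceIte, one_pow,
    Finset.sum_sub_distrib, Finset.sum_const, Finset.card_range, nsmul_eq_mul, mul_one]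
  ring

end ThresholdEpoch

/-- Threshold-greedy epoch length (second moment): if `τ₁, τ₂, …` are i.i.d. exponential of
rate 1, `N` is geometric on `{1,2,…}` with `P(N = m) = q^{m−1}(1−q)`, independent of the sequence,
and `α = max(γ, τ₁) + Σ_{k=2}^N τ_k`, then
`E[α²] = γ² + 2(γ+1)e^{−γ} + 2(γ + e^{−γ})·q/(1−q) + 2q/(1−q)²`. -/
theorem stmt12 {Ω : Type*} {mΩ : MeasurableSpace Ω} (μ : Measure Ω) [IsProbabilityMeasure μ]
    (q γ : ℝ) (hq0 : 0 < q) (hq1 : q < 1) (hγ : 0 ≤ γ)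
    (τ : ℕ → Ω → ℝ) (hmeas : ∀ k, Measurable (τ k))
    (hdist : ∀ k, μ.map (τ k) = expMeasure 1)
    (hindep : iIndepFun τ μ)
    (N : Ω → ℕ) (hNmeas : Measurable N)
    (hN : ∀ m : ℕ, 1 ≤ m → μ {ω | N ω = m} = ENNReal.ofReal (q ^ (m - 1) * (1 - q)))
    (hNindep : IndepFun N (fun ω => fun k => τ k ω) μ) :
    ∫ ω, (max γ (τ 0 ω) + ∑ k ∈ Finset.Ico 1 (N ω), τ k ω) ^ 2 ∂μ
      = γ ^ 2 + 2 * (γ + 1) * Real.exp (-γ)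
        + 2 * (γ + Real.exp (-γ)) * q / (1 - q) + 2 * q / (1 - q) ^ 2 := by
  have hN0 : μ.real {ω | N ω = 0} = 0 := by
    rw [measureReal_def, measure_eq_zero_of_geometric hNmeas hq0.le hq1 hN, ENNReal.toReal_zero]
  refine integral_comp_eq_of_indepFun_of_hasSum
    (F := fun m y => (max γ (y 0) + ∑ k ∈ Finset.Ico 1 m, y k) ^ 2) hNmeas
    (measurable_pi_lambda _ hmeas) hNindep (fun _ => by fun_prop) (fun _ _ => sq_nonneg _)
    (fun m => (memLp_max_add_sum_of_map_eq_expMeasure hmeas hdist hγ m).integrable_sq) ?_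
  refine (hasSum_nat_add_iff' 1).1 ?_
  simp only [Finset.range_one, Finset.sum_singleton, hN0, zero_mul, sub_zero]
  refine (hasSum_geometric_mul_quadratic (abs_lt.2 ⟨by linarith, hq1⟩)
    (γ ^ 2 + 2 * (γ + 1) * exp (-γ)) (γ + exp (-γ))).congr_fun fun n => ?_
  rw [measureReal_def, hN (n + 1) le_add_self, Nat.add_sub_cancel,
    ENNReal.toReal_ofReal (mul_nonneg (by positivity) (by linarith)),
    integral_sq_max_add_sum_of_iIndepFun hmeas hdist hindep hγ n]
end
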